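/- arXiv:math/0505085 — 2 statements merged into one kernel-verified Lean document; each statement's English description precedes it below -/
import Mathlib

section
/- Let n ≥ 2 and m ≥ 1. Every face of Δ_B(m,n) that is maximal with respect to inclusion has exactly n elements (i.e., Δ_B(m,n) is pure of dimension n−1). -/
/-- `x` lies strictly inside the open arc from `a` counterclockwise to `b`
in the convex `N`-gon whose vertices are identified with `ZMod N`. -/
def ArcBtw {N : ℕ} (a b x : ZMod N) : Prop :=
  ∃ k : ℕ, 0 < k ∧ k < (b - a).val ∧ x = a + (k : ZMod N)

/-- `p` is a diagonal of the convex `N`-gon: an unordered pair `{a, b}` of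
vertices with `b ∉ {a, a+1, a-1}`. -/
def IsDiagonal {N : ℕ} (p : Sym2 (ZMod N)) : Prop :=
  ∃ a b : ZMod N, p = s(a, b) ∧ b ≠ a ∧ b ≠ a + 1 ∧ b ≠ a - 1

/-- The diagonals `p` and `q` cross: their endpoints interleave in cyclic
order, i.e. exactly one endpoint of one of them lies strictly inside one of
the two open arcs determined by the other. -/
def Crosses {N : ℕ} (p q : Sym2 (ZMod N)) : Prop :=
  ∃ a b c d : ZMod N, p = s(a, b) ∧ q = s(c, d) ∧ ArcBtw a b c ∧ ArcBtw b a d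

/-- The diagonal `p = {a, b}` is `m`-allowable: the number of vertices
strictly between `a` and `b` on each of the two arcs determined by `{a, b}`
is divisible by `m`. -/
def MAllowable {N : ℕ} (m : ℕ) (p : Sym2 (ZMod N)) : Prop :=
  ∃ a b : ZMod N, p = s(a, b) ∧ m ∣ ((b - a).val - 1) ∧ m ∣ ((a - b).val - 1)

/-- A face of the complex `Δ(m, n)` (with `N = (n+1)m+2`): a set of pairwise
noncrossing `m`-allowable diagonals of the convex `N`-gon. -/
def IsFace {N : ℕ} (m : ℕ) (F : Finset (Sym2 (ZMod N))) : Prop :=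
  (∀ p ∈ F, IsDiagonal p ∧ MAllowable m p) ∧ ∀ p ∈ F, ∀ q ∈ F, ¬ Crosses p q

/-- The antipodal map of the convex `(2nm+2)`-gon, `a ↦ a + nm + 1`. -/
def antipode (n m : ℕ) : ZMod (2 * n * m + 2) → ZMod (2 * n * m + 2) :=
  fun a => a + ((n * m + 1 : ℕ) : ZMod (2 * n * m + 2))

/-- `p` is a diameter of the convex `(2nm+2)`-gon: a diagonal of the form `{a, σ(a)}`. -/
def IsDiameter (n m : ℕ) (p : Sym2 (ZMod (2 * n * m + 2))) : Prop :=
  ∃ a : ZMod (2 * n * m + 2), p = s(a, antipode n m a)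

/-- A vertex of the simplicial complex `Δ_B(m, n)`: either a diameter, or an
unordered pair `{D, σ(D)}` where `D` is an `m`-allowable diagonal that is not
a diameter. -/
def IsBVertex (n m : ℕ) (v : Finset (Sym2 (ZMod (2 * n * m + 2)))) : Prop :=
  (∃ p, IsDiameter n m p ∧ v = {p}) ∨
  (∃ p, IsDiagonal p ∧ MAllowable m p ∧ ¬ IsDiameter n m p ∧
    v = {p, Sym2.map (antipode n m) p})

/-- Two vertices of `Δ_B(m, n)` are compatible if no diagonal representing one
of them crosses a diagonal representing the other. -/
def BCompat (n m : ℕ) (v w : Finset (Sym2 (ZMod (2 * n * m + 2)))) : Prop :=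
  ∀ p ∈ v, ∀ q ∈ w, ¬ Crosses p q

/-- A face of `Δ_B(m, n)`: a set of pairwise compatible vertices. -/
def IsBFace (n m : ℕ) (F : Finset (Finset (Sym2 (ZMod (2 * n * m + 2))))) : Prop :=
  (∀ v ∈ F, IsBVertex n m v) ∧ ∀ v ∈ F, ∀ w ∈ F, v ≠ w → BCompat n m v w

/-!
A maximal face contains a diameter `{a, σ a}`: otherwise take a diagonal `D` of the face whose
shorter arc is as long as possible; the diameter through the endpoint where that arc starts
crosses no diagonal of the face and could be added. Every other vertex `{D, σ D}` of the face
then has exactly one representative inside the half `a, a + 1, …, a + (nm + 1)` of the polygon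
cut off by this diameter. Written in coordinates relative to `a`, these representatives and the
diameter form a maximal noncrossing set of `m`-allowable chords of the segment `[0, nm + 1]`.
Such a set on `[0, L]` always has `(L - 1) / m` elements: a shortest chord is an ear spanning
`m + 1` steps, and deleting it together with its `m` interior points leaves a maximal set on
`[0, L - m]`.
-/

-- `2 ≤ c.2 - c.1` is truncated subtraction, so it also forces `c.1 < c.2`.
def IsAllowableChord (m L : ℕ) (c : ℕ × ℕ) : Prop :=
  2 ≤ c.2 - c.1 ∧ c.2 ≤ L ∧ m ∣ c.2 - c.1 - 1

def ChordsCross (c d : ℕ × ℕ) : Prop :=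
  (c.1 < d.1 ∧ d.1 < c.2 ∧ c.2 < d.2) ∨ (d.1 < c.1 ∧ c.1 < d.2 ∧ d.2 < c.2)

def IsMaximalNoncrossing (m L : ℕ) (T : Finset (ℕ × ℕ)) : Prop :=
  (∀ c ∈ T, IsAllowableChord m L c) ∧ (∀ c ∈ T, ∀ d ∈ T, ¬ ChordsCross c d) ∧ (0, L) ∈ T ∧
    ∀ c, IsAllowableChord m L c → c ∉ T → ∃ d ∈ T, ChordsCross c d

def IsEar (T : Finset (ℕ × ℕ)) (C : ℕ × ℕ) : Prop :=
  C ∈ T ∧ ∀ D ∈ T, D ≠ C → (D.1 ≤ C.1 ∨ C.2 ≤ D.1) ∧ (D.2 ≤ C.1 ∨ C.2 ≤ D.2)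

lemma chordsCross_comm {c d : ℕ × ℕ} : ChordsCross c d ↔ ChordsCross d c := by
  unfold ChordsCross; tauto

lemma chordsCross_map_iff {f : ℕ → ℕ} {s : ℕ → Prop}
    (hf : ∀ x y, s x → s y → (f x < f y ↔ x < y)) {c d : ℕ × ℕ}
    (hc : s c.1 ∧ s c.2) (hd : s d.1 ∧ s d.2) :
    ChordsCross (Prod.map f f c) (Prod.map f f d) ↔ ChordsCross c d := by
  simp only [ChordsCross, Prod.map_fst, Prod.map_snd, hf _ _ hc.1 hd.1, hf _ _ hd.1 hc.2,
    hf _ _ hc.2 hd.2, hf _ _ hd.1 hc.1, hf _ _ hc.1 hd.2, hf _ _ hd.2 hc.2]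

lemma exists_isEar {T : Finset (ℕ × ℕ)} (hT : T.Nonempty) (hlt : ∀ c ∈ T, c.1 < c.2)
    (hcr : ∀ c ∈ T, ∀ d ∈ T, ¬ ChordsCross c d) : ∃ C, IsEar T C := by
  obtain ⟨C, hC, hmin⟩ := T.exists_min_image (fun c => c.2 - c.1) hT
  refine ⟨C, hC, fun D hD hDC => ?_⟩
  have hne : D.1 ≠ C.1 ∨ D.2 ≠ C.2 := by rwa [Ne, Prod.ext_iff, not_and_or] at hDC
  have := hcr C hC D hD
  have := hmin D hD
  have := hlt C hC
  have := hlt D hD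
  unfold ChordsCross at *
  omega

namespace IsMaximalNoncrossing

variable {m L : ℕ} {T : Finset (ℕ × ℕ)}

lemma m_pos (hT : IsMaximalNoncrossing m L T) : 0 < m :=
  Nat.pos_of_ne_zero fun h => by
    obtain ⟨h2, -, hd⟩ := hT.1 _ hT.2.2.1
    simp only [h, zero_dvd_iff] at hd
    omega

lemma snd_eq_of_isEar (hT : IsMaximalNoncrossing m L T) {C : ℕ × ℕ} (hC : IsEar T C) :
    C.2 = C.1 + m + 1 := by
  have hm := hT.m_pos
  obtain ⟨hch, -, -, hmax⟩ := hT
  obtain ⟨hC2, hCL, q, hq⟩ := hch C hC.1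
  by_contra hne
  have hq2 : 2 ≤ q := by
    by_contra! hq2
    interval_cases q <;> simp only [mul_zero, mul_one] at hq <;> omega
  have := Nat.mul_le_mul_left m hq2
  have hE : IsAllowableChord m L (C.1, C.1 + m + 1) := by
    refine ⟨by dsimp only; omega, by dsimp only; omega, ?_⟩
    rw [show C.1 + m + 1 - C.1 - 1 = m by omega]
  have hET : (C.1, C.1 + m + 1) ∉ T := fun h => by
    have := hC.2 _ h fun h' => hne (by rw [← h'])
    dsimp only at this
    omega
  obtain ⟨d, hd, hcross⟩ := hmax _ hE hET
  have hdC : d ≠ C := by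
    rintro rfl
    simp only [ChordsCross] at hcross
    omega
  have := hC.2 d hd hdC
  simp only [ChordsCross] at hcross
  omega

end IsMaximalNoncrossing

def contract (i m x : ℕ) : ℕ := if x ≤ i then x else x - m

def expand (i m x : ℕ) : ℕ := if x ≤ i then x else x + m

lemma contract_lt_contract_iff {i m x y : ℕ} (hx : x ≤ i ∨ i + m + 1 ≤ x)
    (hy : y ≤ i ∨ i + m + 1 ≤ y) : contract i m x < contract i m y ↔ x < y := by
  unfold contract; split_ifs <;> omega

lemma contract_expand (i m x : ℕ) : contract i m (expand i m x) = x := by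
  unfold contract expand; split_ifs <;> omega

lemma expand_le_or_le (i m x : ℕ) : expand i m x ≤ i ∨ i + m + 1 ≤ expand i m x := by
  unfold expand; split_ifs <;> omega

def removeEar (m : ℕ) (T : Finset (ℕ × ℕ)) (C : ℕ × ℕ) : Finset (ℕ × ℕ) :=
  (T.erase C).image (Prod.map (contract C.1 m) (contract C.1 m))

namespace IsMaximalNoncrossing

variable {m L : ℕ} {T : Finset (ℕ × ℕ)} {C : ℕ × ℕ}

lemma outside_of_mem_erase (hT : IsMaximalNoncrossing m L T) (hC : IsEar T C) {D : ℕ × ℕ}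
    (hD : D ∈ T.erase C) :
    (D.1 ≤ C.1 ∨ C.1 + m + 1 ≤ D.1) ∧ (D.2 ≤ C.1 ∨ C.1 + m + 1 ≤ D.2) := by
  rw [← hT.snd_eq_of_isEar hC]
  exact hC.2 D (Finset.mem_of_mem_erase hD) (Finset.ne_of_mem_erase hD)

lemma isAllowableChord_contract (hT : IsMaximalNoncrossing m L T) (hC : IsEar T C)
    {D : ℕ × ℕ} (hD : D ∈ T.erase C) :
    IsAllowableChord m (L - m) (Prod.map (contract C.1 m) (contract C.1 m) D) := by
  have hlen := hT.snd_eq_of_isEar hC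
  have hCL := (hT.1 C hC.1).2.1
  obtain ⟨hD2, hDL, hdvd⟩ := hT.1 D (Finset.mem_of_mem_erase hD)
  obtain ⟨hD1, hD2'⟩ := hT.outside_of_mem_erase hC hD
  have hDC : D.1 ≠ C.1 ∨ D.2 ≠ C.2 := by
    rw [← not_and_or, ← Prod.ext_iff]; exact Finset.ne_of_mem_erase hD
  simp only [IsAllowableChord, Prod.map_fst, Prod.map_snd]
  have hlen' : contract C.1 m D.2 - contract C.1 m D.1 = D.2 - D.1 ∨
      contract C.1 m D.2 - contract C.1 m D.1 + m = D.2 - D.1 ∧ m + 2 ≤ D.2 - D.1 := by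
    unfold contract; split_ifs <;> omega
  refine ⟨by omega, by unfold contract; split_ifs <;> omega, ?_⟩
  rcases hlen' with h | ⟨h, -⟩
  · rwa [h]
  · rw [show contract C.1 m D.2 - contract C.1 m D.1 - 1 = D.2 - D.1 - 1 - m by omega]
    exact Nat.dvd_sub hdvd dvd_rfl

lemma exists_chordsCross_removeEar (hT : IsMaximalNoncrossing m L T) (hC : IsEar T C)
    {c : ℕ × ℕ} (hc : IsAllowableChord m (L - m) c) (hcT : c ∉ removeEar m T C) :
    ∃ d ∈ removeEar m T C, ChordsCross c d := by
  have hlen := hT.snd_eq_of_isEar hC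
  have hCL := (hT.1 C hC.1).2.1
  obtain ⟨hc2, hcL, hdvd⟩ := hc
  set E := Prod.map (expand C.1 m) (expand C.1 m) c
  have hEc : Prod.map (contract C.1 m) (contract C.1 m) E = c :=
    Prod.ext (contract_expand _ _ _) (contract_expand _ _ _)
  have hlenE : E.2 - E.1 = c.2 - c.1 ∨ E.2 - E.1 = c.2 - c.1 + m := by
    simp only [E, Prod.map_fst, Prod.map_snd, expand]; split_ifs <;> omega
  have hE : IsAllowableChord m L E := by
    refine ⟨by omega, by simp only [E, Prod.map_snd, expand]; split_ifs <;> omega, ?_⟩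
    rcases hlenE with h | h
    · rwa [h]
    · rw [h, show c.2 - c.1 + m - 1 = c.2 - c.1 - 1 + m by omega]
      exact Nat.dvd_add hdvd dvd_rfl
  have hET : E ∉ T := by
    intro hE
    by_cases hEC : E = C
    · simp only [E, Prod.ext_iff, Prod.map_fst, Prod.map_snd, expand] at hEC
      split_ifs at hEC <;> omega
    · exact hcT (Finset.mem_image.2 ⟨E, Finset.mem_erase.2 ⟨hEC, hE⟩, hEc⟩)
  obtain ⟨d, hd, hcr⟩ := hT.2.2.2 E hE hET
  have hEout : ∀ x, expand C.1 m x ≤ C.1 ∨ C.1 + m + 1 ≤ expand C.1 m x := expand_le_or_le C.1 m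
  have hdC : d ≠ C := by
    rintro rfl
    have := hEout c.1
    have := hEout c.2
    simp only [ChordsCross, E, Prod.map_fst, Prod.map_snd] at hcr
    omega
  have hdout := hT.outside_of_mem_erase hC (Finset.mem_erase.2 ⟨hdC, hd⟩)
  refine ⟨_, Finset.mem_image_of_mem _ (Finset.mem_erase.2 ⟨hdC, hd⟩), ?_⟩
  rwa [← hEc, chordsCross_map_iff (fun x y => contract_lt_contract_iff)
    ⟨hEout c.1, hEout c.2⟩ hdout]

lemma removeEar_isMaximalNoncrossing (hT : IsMaximalNoncrossing m L T) (hC : IsEar T C)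
    (hCL : C ≠ (0, L)) : IsMaximalNoncrossing m (L - m) (removeEar m T C) := by
  have hLC := (hT.1 C hC.1).2.1
  have hlen := hT.snd_eq_of_isEar hC
  refine ⟨?_, ?_, ?_, fun c hc hcT => hT.exists_chordsCross_removeEar hC hc hcT⟩
  · simp only [removeEar, Finset.forall_mem_image]
    exact fun D hD => hT.isAllowableChord_contract hC hD
  · simp only [removeEar, Finset.forall_mem_image]
    intro D hD E hE
    rw [chordsCross_map_iff (fun x y => contract_lt_contract_iff)
      (hT.outside_of_mem_erase hC hD) (hT.outside_of_mem_erase hC hE)]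
    exact hT.2.1 D (Finset.mem_of_mem_erase hD) E (Finset.mem_of_mem_erase hE)
  · refine Finset.mem_image.2 ⟨(0, L), Finset.mem_erase.2 ⟨hCL.symm, hT.2.2.1⟩, ?_⟩
    simp only [Prod.map, contract, Prod.mk.injEq]
    split_ifs <;> omega

lemma card_removeEar (hT : IsMaximalNoncrossing m L T) (hC : IsEar T C) :
    (removeEar m T C).card = T.card - 1 := by
  rw [removeEar, Finset.card_image_of_injOn, Finset.card_erase_of_mem hC.1]
  intro D hD E hE hDE
  obtain ⟨hD1, hD2⟩ := hT.outside_of_mem_erase hC hD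
  obtain ⟨hE1, hE2⟩ := hT.outside_of_mem_erase hC hE
  have := contract_lt_contract_iff hD1 hE1
  have := contract_lt_contract_iff hE1 hD1
  have := contract_lt_contract_iff hD2 hE2
  have := contract_lt_contract_iff hE2 hD2
  simp only [Prod.ext_iff, Prod.map_fst, Prod.map_snd] at hDE ⊢
  omega

theorem card_mul_eq (hT : IsMaximalNoncrossing m L T) : T.card * m = L - 1 := by
  induction L using Nat.strong_induction_on generalizing T with
  | _ L ih =>
  have hm := hT.m_pos
  have hL := (hT.1 _ hT.2.2.1).1
  obtain ⟨C, hC⟩ := exists_isEar ⟨_, hT.2.2.1⟩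
    (fun c hc => by have := (hT.1 c hc).1; omega) hT.2.1
  have hlen := hT.snd_eq_of_isEar hC
  by_cases hCL : C = (0, L)
  · subst hCL
    have hT1 : T = {(0, L)} := Finset.eq_singleton_iff_unique_mem.2 ⟨hT.2.2.1, fun D hD => by
      by_contra hDC
      obtain ⟨h1, h2⟩ := hC.2 D hD hDC
      obtain ⟨hD2, hDL, -⟩ := hT.1 D hD
      dsimp only at h1 h2
      exact hDC (Prod.ext (by dsimp only; omega) (by dsimp only; omega))⟩
    dsimp only at hlen
    rw [hT1, Finset.card_singleton, one_mul]
    omega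
  · have hLC := (hT.1 C hC.1).2.1
    have h := ih (L - m) (by omega) (hT.removeEar_isMaximalNoncrossing hC hCL)
    rw [hT.card_removeEar hC] at h
    obtain ⟨k, hk⟩ : ∃ k, T.card = k + 1 :=
      Nat.exists_eq_add_one.2 (Finset.card_pos.2 ⟨_, hT.2.2.1⟩)
    rw [hk, Nat.add_sub_cancel] at h
    rw [hk, add_mul, one_mul]
    omega

end IsMaximalNoncrossing

section Polygon

variable {N : ℕ}

-- The positions of the endpoints of `p`, counted counterclockwise from `a`, in increasing order.
def chord (a : ZMod N) (p : Sym2 (ZMod N)) : ℕ × ℕ :=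
  Sym2.lift ⟨fun x y => (min (x - a).val (y - a).val, max (x - a).val (y - a).val),
    fun _ _ => Prod.ext (min_comm _ _) (max_comm _ _)⟩ p

lemma chord_map_add (a t : ZMod N) (p : Sym2 (ZMod N)) :
    chord (a + t) (Sym2.map (· + t) p) = chord a p := by
  induction p using Sym2.ind
  simp [chord, add_sub_add_right_eq_sub]

lemma crosses_mk_iff {x y z w : ZMod N} :
    Crosses s(x, y) s(z, w) ↔
      (ArcBtw x y z ∧ ArcBtw y x w) ∨ (ArcBtw x y w ∧ ArcBtw y x z) := by
  constructor
  · rintro ⟨a, b, c, d, hp, hq, h1, h2⟩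
    rcases Sym2.eq_iff.1 hp with ⟨rfl, rfl⟩ | ⟨rfl, rfl⟩ <;>
      rcases Sym2.eq_iff.1 hq with ⟨rfl, rfl⟩ | ⟨rfl, rfl⟩ <;> tauto
  · rintro (⟨h1, h2⟩ | ⟨h1, h2⟩)
    · exact ⟨x, y, z, w, rfl, rfl, h1, h2⟩
    · exact ⟨x, y, w, z, rfl, Sym2.eq_swap, h1, h2⟩

lemma isDiagonal_mk_iff {x y : ZMod N} :
    IsDiagonal s(x, y) ↔ y - x ≠ 0 ∧ y - x ≠ 1 ∧ x - y ≠ 1 := by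
  constructor
  · rintro ⟨a, b, he, h1, h2, h3⟩
    rcases Sym2.eq_iff.1 he with ⟨rfl, rfl⟩ | ⟨rfl, rfl⟩
    · exact ⟨sub_ne_zero.2 h1, fun h => h2 (by linear_combination h),
        fun h => h3 (by linear_combination -h)⟩
    · exact ⟨sub_ne_zero.2 (Ne.symm h1), fun h => h3 (by linear_combination -h),
        fun h => h2 (by linear_combination h)⟩
  · rintro ⟨h1, h2, h3⟩
    exact ⟨x, y, rfl, sub_ne_zero.1 h1, fun h => h2 (by linear_combination h),
      fun h => h3 (by linear_combination -h)⟩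

lemma mAllowable_mk_iff {m : ℕ} {x y : ZMod N} :
    MAllowable m s(x, y) ↔ m ∣ (y - x).val - 1 ∧ m ∣ (x - y).val - 1 := by
  constructor
  · rintro ⟨a, b, he, h1, h2⟩
    rcases Sym2.eq_iff.1 he with ⟨rfl, rfl⟩ | ⟨rfl, rfl⟩
    exacts [⟨h1, h2⟩, ⟨h2, h1⟩]
  · exact fun h => ⟨x, y, rfl, h⟩

lemma isDiagonal_map_add_iff (t : ZMod N) {p : Sym2 (ZMod N)} :
    IsDiagonal (Sym2.map (· + t) p) ↔ IsDiagonal p := by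
  induction p using Sym2.ind
  simp only [Sym2.map_mk, isDiagonal_mk_iff, add_sub_add_right_eq_sub]

lemma mAllowable_map_add_iff {m : ℕ} (t : ZMod N) {p : Sym2 (ZMod N)} :
    MAllowable m (Sym2.map (· + t) p) ↔ MAllowable m p := by
  induction p using Sym2.ind
  simp only [Sym2.map_mk, mAllowable_mk_iff, add_sub_add_right_eq_sub]

lemma val_add_natCast_sub (a : ZMod N) {i j : ℕ} (hi : i < N) (hj : j < N) :
    ((a + j) - (a + i)).val = if i ≤ j then j - i else N + j - i := by
  rw [add_sub_add_left_eq_sub]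
  split_ifs with h
  · rw [← Nat.cast_sub h, ZMod.val_natCast_of_lt (by omega)]
  · rw [← ZMod.val_natCast_of_lt (show N + j - i < N by omega), Nat.cast_sub (by omega),
      Nat.cast_add, ZMod.natCast_self, zero_add]

lemma chord_mk_natCast (a : ZMod N) {i j : ℕ} (hi : i < N) (hj : j < N) :
    chord a s(a + (i : ZMod N), a + (j : ZMod N)) = (min i j, max i j) := by
  simp [chord, ZMod.val_natCast_of_lt hi, ZMod.val_natCast_of_lt hj]

lemma isDiagonal_mk_natCast_iff (hN : 1 < N) (a : ZMod N) {i j : ℕ} (hij : i ≤ j) (hj : j < N) :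
    IsDiagonal s(a + (i : ZMod N), a + (j : ZMod N)) ↔ 2 ≤ j - i ∧ j - i + 2 ≤ N := by
  rw [isDiagonal_mk_iff, Ne, ← ZMod.val_eq_zero, Ne, ← ZMod.val_eq_one hN, Ne,
    ← ZMod.val_eq_one hN, val_add_natCast_sub a (by omega) hj,
    val_add_natCast_sub a hj (by omega)]
  split_ifs <;> omega

lemma mAllowable_mk_natCast_iff {m : ℕ} (a : ZMod N) {i j : ℕ} (hij : i < j) (hj : j < N) :
    MAllowable m s(a + (i : ZMod N), a + (j : ZMod N)) ↔ m ∣ j - i - 1 ∧ m ∣ N - (j - i) - 1 := by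
  rw [mAllowable_mk_iff, val_add_natCast_sub a (by omega) hj,
    val_add_natCast_sub a hj (by omega), if_pos hij.le, if_neg (by omega),
    show N + i - j - 1 = N - (j - i) - 1 by omega]

def shortLen (p : Sym2 (ZMod N)) : ℕ :=
  Sym2.lift ⟨fun x y => min (y - x).val (x - y).val, fun _ _ => min_comm _ _⟩ p

lemma shortLen_mk_natCast (a : ZMod N) {i j : ℕ} (hij : i ≤ j) (hj : j < N) :
    shortLen s(a + (i : ZMod N), a + (j : ZMod N)) = min (j - i) (N - (j - i)) := by
  rw [shortLen, Sym2.lift_mk]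
  dsimp only
  rw [val_add_natCast_sub a (by omega) hj, val_add_natCast_sub a hj (by omega)]
  split_ifs <;> omega

variable [NeZero N]

lemma exists_eq_mk_natCast (a : ZMod N) (p : Sym2 (ZMod N)) :
    ∃ i j : ℕ, i ≤ j ∧ j < N ∧ p = s(a + (i : ZMod N), a + (j : ZMod N)) := by
  induction p using Sym2.ind with | _ x y => ?_
  rcases le_total (x - a).val (y - a).val with h | h
  · exact ⟨_, _, h, ZMod.val_lt _, by simp⟩
  · exact ⟨_, _, h, ZMod.val_lt _, by simp [Sym2.eq_swap]⟩

lemma chord_injective (a : ZMod N) : Function.Injective (chord a) := by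
  intro p q h
  obtain ⟨i, j, hij, hj, rfl⟩ := exists_eq_mk_natCast a p
  obtain ⟨u, v, huv, hv, rfl⟩ := exists_eq_mk_natCast a q
  rw [chord_mk_natCast a (by omega) hj, chord_mk_natCast a (by omega) hv, min_eq_left hij,
    max_eq_right hij, min_eq_left huv, max_eq_right huv, Prod.mk.injEq] at h
  rw [h.1, h.2]

lemma arcBtw_iff_val (a b x : ZMod N) :
    ArcBtw a b x ↔ 0 < (x - a).val ∧ (x - a).val < (b - a).val := by
  constructor
  · rintro ⟨k, hk0, hk, rfl⟩
    rw [add_sub_cancel_left, ZMod.val_natCast_of_lt (hk.trans (ZMod.val_lt _))]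
    exact ⟨hk0, hk⟩
  · rintro ⟨h0, h1⟩
    exact ⟨(x - a).val, h0, h1, by simp⟩

lemma crosses_iff_chordsCross (a : ZMod N) (p q : Sym2 (ZMod N)) :
    Crosses p q ↔ ChordsCross (chord a p) (chord a q) := by
  obtain ⟨i, j, hij, hj, rfl⟩ := exists_eq_mk_natCast a p
  obtain ⟨u, v, huv, hv, rfl⟩ := exists_eq_mk_natCast a q
  have hi : i < N := by omega
  have hu : u < N := by omega
  rw [crosses_mk_iff, chord_mk_natCast a hi hj, chord_mk_natCast a hu hv]
  simp only [arcBtw_iff_val, val_add_natCast_sub a, hi, hj, hu, hv, ChordsCross]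
  split_ifs <;> omega

lemma not_crosses_self (p : Sym2 (ZMod N)) : ¬ Crosses p p := by
  rw [crosses_iff_chordsCross 0, ChordsCross]
  omega

lemma crosses_comm {p q : Sym2 (ZMod N)} : Crosses p q ↔ Crosses q p := by
  rw [crosses_iff_chordsCross 0, crosses_iff_chordsCross 0, chordsCross_comm]

lemma crosses_map_add_iff (t : ZMod N) (p q : Sym2 (ZMod N)) :
    Crosses (Sym2.map (· + t) p) (Sym2.map (· + t) q) ↔ Crosses p q := by
  rw [crosses_iff_chordsCross (0 + t), chord_map_add, chord_map_add,
    ← crosses_iff_chordsCross]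

lemma exists_eq_mk_add_shortLen (p : Sym2 (ZMod N)) :
    ∃ x, p = s(x, x + (shortLen p : ZMod N)) := by
  induction p using Sym2.ind with | _ x y => ?_
  rcases le_total (y - x).val (x - y).val with h | h
  · exact ⟨x, by simp [shortLen, min_eq_left h]⟩
  · exact ⟨y, by simp [shortLen, min_eq_right h, Sym2.eq_swap]⟩

lemma two_mul_shortLen_le (p : Sym2 (ZMod N)) : 2 * shortLen p ≤ N := by
  obtain ⟨i, j, hij, hj, rfl⟩ := exists_eq_mk_natCast 0 p
  rw [shortLen_mk_natCast 0 hij hj]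
  omega

end Polygon

section TypeB

variable {n m : ℕ}

lemma antipode_add_natCast (a : ZMod (2 * n * m + 2)) (i : ℕ) :
    antipode n m (a + i) = a + ((if i < n * m + 1 then i + (n * m + 1) else i - (n * m + 1) : ℕ) :
      ZMod (2 * n * m + 2)) := by
  rw [antipode, add_assoc, ← Nat.cast_add]
  split_ifs with h
  · rfl
  · -- lets `omega` relate the atoms `2 * n * m` and `n * m`
    have := mul_assoc 2 n m
    rw [show i + (n * m + 1) = i - (n * m + 1) + (2 * n * m + 2) by omega, Nat.cast_add,
      ZMod.natCast_self, add_zero]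

lemma antipode_involutive : Function.Involutive (antipode n m) := by
  intro a
  rw [antipode, antipode, add_assoc, ← Nat.cast_add,
    show n * m + 1 + (n * m + 1) = 2 * n * m + 2 by ring, ZMod.natCast_self, add_zero]

lemma map_antipode_involutive : Function.Involutive (Sym2.map (antipode n m)) := by
  intro p
  rw [Sym2.map_map, antipode_involutive.comp_self, Sym2.map_id, id]

lemma IsDiameter.map_antipode {p : Sym2 (ZMod (2 * n * m + 2))} (hp : IsDiameter n m p) :
    Sym2.map (antipode n m) p = p := by
  obtain ⟨a, rfl⟩ := hp
  rw [Sym2.map_mk, antipode_involutive, Sym2.eq_swap]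

lemma crosses_map_antipode_iff (p q : Sym2 (ZMod (2 * n * m + 2))) :
    Crosses (Sym2.map (antipode n m) p) (Sym2.map (antipode n m) q) ↔ Crosses p q :=
  crosses_map_add_iff _ p q

lemma mk_antipode_eq (a : ZMod (2 * n * m + 2)) :
    s(a, antipode n m a) =
      s(a + ((0 : ℕ) : ZMod (2 * n * m + 2)), a + ((n * m + 1 : ℕ) : ZMod (2 * n * m + 2))) := by
  rw [Nat.cast_zero, add_zero]
  rfl

lemma chord_mk_antipode (a : ZMod (2 * n * m + 2)) :
    chord a s(a, antipode n m a) = (0, n * m + 1) := by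
  have := mul_assoc 2 n m
  rw [mk_antipode_eq, chord_mk_natCast a (by omega) (by omega)]
  simp

lemma chord_map_antipode (a : ZMod (2 * n * m + 2)) {i j : ℕ} (hij : i ≤ j)
    (hj : j < 2 * n * m + 2) :
    chord a (Sym2.map (antipode n m) s(a + (i : ZMod (2 * n * m + 2)), a + (j : ZMod _))) =
      if j < n * m + 1 then (i + (n * m + 1), j + (n * m + 1))
      else if n * m + 1 ≤ i then (i - (n * m + 1), j - (n * m + 1))
      else (j - (n * m + 1), i + (n * m + 1)) := by
  have := mul_assoc 2 n m
  rw [Sym2.map_mk, antipode_add_natCast, antipode_add_natCast,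
    chord_mk_natCast a (by split_ifs <;> omega) (by split_ifs <;> omega)]
  split_ifs <;> simp only [Prod.mk.injEq] <;> omega

lemma not_crosses_map_antipode (p : Sym2 (ZMod (2 * n * m + 2))) :
    ¬ Crosses p (Sym2.map (antipode n m) p) := by
  obtain ⟨i, j, hij, hj, rfl⟩ := exists_eq_mk_natCast 0 p
  have := mul_assoc 2 n m
  rw [crosses_iff_chordsCross 0, chord_mk_natCast 0 (by omega) hj, chord_map_antipode 0 hij hj,
    ChordsCross]
  split_ifs <;> omega

lemma chord_snd_le_or_chord_map_snd_le (a : ZMod (2 * n * m + 2)) {q : Sym2 (ZMod (2 * n * m + 2))}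
    (hq : ¬ Crosses s(a, antipode n m a) q) :
    (chord a q).2 ≤ n * m + 1 ∨ (chord a (Sym2.map (antipode n m) q)).2 ≤ n * m + 1 := by
  obtain ⟨i, j, hij, hj, rfl⟩ := exists_eq_mk_natCast a q
  have := mul_assoc 2 n m
  rw [crosses_iff_chordsCross a, chord_mk_antipode, chord_mk_natCast a (by omega) hj,
    ChordsCross] at hq
  rw [chord_map_antipode a hij hj, chord_mk_natCast a (by omega) hj]
  split_ifs <;> dsimp only <;> omega

lemma map_antipode_eq_self_of_chord_snd_le (a : ZMod (2 * n * m + 2))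
    {q : Sym2 (ZMod (2 * n * m + 2))} (hq : IsDiagonal q) (h : (chord a q).2 ≤ n * m + 1)
    (hσ : (chord a (Sym2.map (antipode n m) q)).2 ≤ n * m + 1) :
    Sym2.map (antipode n m) q = q := by
  obtain ⟨i, j, hij, hj, rfl⟩ := exists_eq_mk_natCast a q
  rw [isDiagonal_mk_natCast_iff (by omega) a hij hj] at hq
  rw [chord_mk_natCast a (by omega) hj] at h
  rw [chord_map_antipode a hij hj] at hσ
  apply chord_injective a
  rw [chord_map_antipode a hij hj, chord_mk_natCast a (by omega) hj]
  split_ifs at hσ ⊢ <;> simp only [Prod.mk.injEq] at hσ ⊢ <;> omega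

theorem exists_diameter_forall_not_crosses (B : Finset (Sym2 (ZMod (2 * n * m + 2))))
    (hcr : ∀ p ∈ B, ∀ q ∈ B, ¬ Crosses p q)
    (hB : ∀ p ∈ B, Sym2.map (antipode n m) p ∈ B) :
    ∃ a, ∀ q ∈ B, ¬ Crosses s(a, antipode n m a) q := by
  rcases B.eq_empty_or_nonempty with rfl | hne
  · exact ⟨0, by simp⟩
  obtain ⟨D, hD, hDmax⟩ := B.exists_max_image shortLen hne
  obtain ⟨a, hDa⟩ := exists_eq_mk_add_shortLen D
  have hℓ := two_mul_shortLen_le D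
  generalize shortLen D = ℓ at hDa hDmax hℓ
  refine ⟨a, fun E hE hcross => ?_⟩
  have h1 := hcr E hE D hD
  have h2 := hcr _ (hB E hE) D hD
  have h3 := hDmax E hE
  obtain ⟨i, j, hij, hj, rfl⟩ := exists_eq_mk_natCast a E
  have := mul_assoc 2 n m
  have hi : i < 2 * n * m + 2 := by omega
  have hD0 : D = s(a + ((0 : ℕ) : ZMod _), a + (ℓ : ZMod _)) := by rw [hDa, Nat.cast_zero, add_zero]
  have hDc : chord a D = (0, ℓ) := by
    rw [hD0, chord_mk_natCast a (by omega) (by omega)]; simp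
  rw [crosses_iff_chordsCross a, hDc, chord_mk_natCast a hi hj] at h1
  rw [crosses_iff_chordsCross a, hDc, chord_map_antipode a hij hj] at h2
  rw [shortLen_mk_natCast a hij hj] at h3
  rw [crosses_iff_chordsCross a, chord_mk_antipode, chord_mk_natCast a hi hj] at hcross
  simp only [ChordsCross] at h1 h2 hcross
  -- Neither `E` nor `σ E` crosses `D = (0, ℓ)`, so both start at or after `ℓ`; then the shorter
  -- arc of `E` would be longer than that of `D`.
  split_ifs at h2 <;> omega

namespace IsBVertex

variable {v : Finset (Sym2 (ZMod (2 * n * m + 2)))} {p q : Sym2 (ZMod (2 * n * m + 2))}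

lemma eq_pair (hv : IsBVertex n m v) (hp : p ∈ v) : v = {p, Sym2.map (antipode n m) p} := by
  rcases hv with ⟨q, hq, rfl⟩ | ⟨q, -, -, -, rfl⟩
  · rw [Finset.mem_singleton] at hp
    subst hp
    rw [hq.map_antipode, Finset.pair_eq_singleton]
  · rcases Finset.mem_insert.1 hp with rfl | hp
    · rfl
    · rw [Finset.mem_singleton.1 hp, map_antipode_involutive, Finset.pair_comm]

lemma nonempty (hv : IsBVertex n m v) : v.Nonempty := by
  rcases hv with ⟨q, -, rfl⟩ | ⟨q, -, -, -, rfl⟩ <;> simp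

lemma isDiagonal_mAllowable (hnm : 0 < n * m) (hv : IsBVertex n m v) (hp : p ∈ v) :
    IsDiagonal p ∧ MAllowable m p := by
  rcases hv with ⟨q, ⟨a, rfl⟩, rfl⟩ | ⟨q, hqd, hqa, -, rfl⟩
  · have := mul_assoc 2 n m
    rw [Finset.mem_singleton.1 hp, mk_antipode_eq, isDiagonal_mk_natCast_iff (by omega) a
      (by omega) (by omega), mAllowable_mk_natCast_iff a (by omega) (by omega),
      show n * m + 1 - 0 - 1 = n * m by omega,
      show 2 * n * m + 2 - (n * m + 1 - 0) - 1 = n * m by omega]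
    exact ⟨by omega, dvd_mul_left m n, dvd_mul_left m n⟩
  · rcases Finset.mem_insert.1 hp with rfl | hp
    · exact ⟨hqd, hqa⟩
    · rw [Finset.mem_singleton.1 hp]
      exact ⟨(isDiagonal_map_add_iff _).2 hqd, (mAllowable_map_add_iff _).2 hqa⟩

lemma not_crosses (hv : IsBVertex n m v) (hp : p ∈ v) (hq : q ∈ v) : ¬ Crosses p q := by
  rw [hv.eq_pair hp, Finset.mem_insert, Finset.mem_singleton] at hq
  rcases hq with rfl | rfl
  exacts [not_crosses_self q, not_crosses_map_antipode p]

end IsBVertex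

namespace IsBFace

variable {F : Finset (Finset (Sym2 (ZMod (2 * n * m + 2))))} {p q : Sym2 (ZMod (2 * n * m + 2))}

lemma not_crosses (hF : IsBFace n m F) (hp : p ∈ F.biUnion id) (hq : q ∈ F.biUnion id) :
    ¬ Crosses p q := by
  obtain ⟨v, hv, hpv⟩ := Finset.mem_biUnion.1 hp
  obtain ⟨w, hw, hqw⟩ := Finset.mem_biUnion.1 hq
  by_cases hvw : v = w
  · subst hvw
    exact (hF.1 v hv).not_crosses hpv hqw
  · exact hF.2 v hv w hw hvw p hpv q hqw

lemma map_antipode_mem (hF : IsBFace n m F) (hp : p ∈ F.biUnion id) :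
    Sym2.map (antipode n m) p ∈ F.biUnion id := by
  obtain ⟨v, hv, hpv⟩ := Finset.mem_biUnion.1 hp
  refine Finset.mem_biUnion.2 ⟨v, hv, ?_⟩
  rw [id, (hF.1 v hv).eq_pair hpv]
  exact Finset.mem_insert_of_mem (Finset.mem_singleton_self _)

lemma isDiagonal_mAllowable (hnm : 0 < n * m) (hF : IsBFace n m F) (hp : p ∈ F.biUnion id) :
    IsDiagonal p ∧ MAllowable m p := by
  obtain ⟨v, hv, hpv⟩ := Finset.mem_biUnion.1 hp
  exact (hF.1 v hv).isDiagonal_mAllowable hnm hpv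

lemma insert (hF : IsBFace n m F) {v : Finset (Sym2 (ZMod (2 * n * m + 2)))}
    (hv : IsBVertex n m v) (hvF : ∀ p ∈ v, ∀ q ∈ F.biUnion id, ¬ Crosses p q) :
    IsBFace n m (insert v F) := by
  refine ⟨(Finset.forall_mem_insert _ _ _).2 ⟨hv, hF.1⟩, ?_⟩
  intro w hw w' hw' hne p hp q hq
  rcases Finset.mem_insert.1 hw with rfl | hwF <;>
    rcases Finset.mem_insert.1 hw' with rfl | hwF'
  · exact absurd rfl hne
  · exact hvF p hp q (Finset.mem_biUnion.2 ⟨w', hwF', hq⟩)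
  · exact fun h => hvF q hq p (Finset.mem_biUnion.2 ⟨w, hwF, hp⟩) (crosses_comm.1 h)
  · exact hF.2 w hwF w' hwF' hne p hp q hq

lemma mem_of_forall_not_crosses (hF : IsBFace n m F)
    (hmax : ∀ G, IsBFace n m G → F ⊆ G → F = G) {v : Finset (Sym2 (ZMod (2 * n * m + 2)))}
    (hv : IsBVertex n m v) (hvF : ∀ p ∈ v, ∀ q ∈ F.biUnion id, ¬ Crosses p q) : v ∈ F := by
  rw [hmax _ (hF.insert hv hvF) (Finset.subset_insert _ _)]
  exact Finset.mem_insert_self _ _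

lemma exists_diameter_mem (hF : IsBFace n m F) (hmax : ∀ G, IsBFace n m G → F ⊆ G → F = G) :
    ∃ a, s(a, antipode n m a) ∈ F.biUnion id := by
  obtain ⟨a, ha⟩ := exists_diameter_forall_not_crosses (F.biUnion id)
    (fun p hp q hq => hF.not_crosses hp hq) (fun p hp => hF.map_antipode_mem hp)
  have hv : IsBVertex n m {s(a, antipode n m a)} := Or.inl ⟨_, ⟨a, rfl⟩, rfl⟩
  refine ⟨a, Finset.mem_biUnion.2 ⟨_, hF.mem_of_forall_not_crosses hmax hv ?_,
    Finset.mem_singleton_self _⟩⟩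
  simpa using ha

end IsBFace

end TypeB

def lowerChords (n m : ℕ) (a : ZMod (2 * n * m + 2)) (B : Finset (Sym2 (ZMod (2 * n * m + 2)))) :
    Finset (ℕ × ℕ) :=
  (B.filter fun p => (chord a p).2 ≤ n * m + 1).image (chord a)

section LowerChords

variable {n m : ℕ} {a : ZMod (2 * n * m + 2)} {F : Finset (Finset (Sym2 (ZMod (2 * n * m + 2))))}

lemma chord_mem_lowerChords {B : Finset (Sym2 (ZMod (2 * n * m + 2)))}
    {p : Sym2 (ZMod (2 * n * m + 2))} (hp : p ∈ B) (h : (chord a p).2 ≤ n * m + 1) :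
    chord a p ∈ lowerChords n m a B :=
  Finset.mem_image_of_mem _ (Finset.mem_filter.2 ⟨hp, h⟩)

lemma zero_mem_lowerChords {B : Finset (Sym2 (ZMod (2 * n * m + 2)))}
    (hM : s(a, antipode n m a) ∈ B) : (0, n * m + 1) ∈ lowerChords n m a B := by
  rw [← chord_mk_antipode (n := n) a]
  exact chord_mem_lowerChords hM (by rw [chord_mk_antipode])

lemma isBVertex_of_isAllowableChord (hnm : 0 < n * m) (a : ZMod (2 * n * m + 2)) {c : ℕ × ℕ}
    (hc : IsAllowableChord m (n * m + 1) c) (hc0 : c ≠ (0, n * m + 1)) :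
    IsBVertex n m {s(a + (c.1 : ZMod _), a + (c.2 : ZMod _)),
      Sym2.map (antipode n m) s(a + (c.1 : ZMod _), a + (c.2 : ZMod _))} := by
  obtain ⟨h2, hcL, hdvd⟩ := hc
  have := mul_assoc 2 n m
  have hN : c.2 < 2 * n * m + 2 := by omega
  refine Or.inr ⟨_, (isDiagonal_mk_natCast_iff (by omega) a (by omega) hN).2 ⟨h2, by omega⟩,
    ?_, fun h => ?_, rfl⟩
  · refine (mAllowable_mk_natCast_iff a (by omega) hN).2 ⟨hdvd, ?_⟩
    rw [show 2 * n * m + 2 - (c.2 - c.1) - 1 = 2 * n * m - (c.2 - c.1 - 1) by omega]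
    exact Nat.dvd_sub (Dvd.intro_left _ rfl) hdvd
  · have hσ := congrArg (chord a) h.map_antipode
    rw [chord_map_antipode a (by omega) hN, chord_mk_natCast a (by omega) hN] at hσ
    rw [Ne, Prod.ext_iff, not_and_or] at hc0
    split_ifs at hσ <;> simp only [Prod.ext_iff] at hσ <;> omega

lemma IsBFace.exists_chordsCross_lowerChords (hnm : 0 < n * m) (hF : IsBFace n m F)
    (hmax : ∀ G, IsBFace n m G → F ⊆ G → F = G) (hM : s(a, antipode n m a) ∈ F.biUnion id)
    {c : ℕ × ℕ} (hc : IsAllowableChord m (n * m + 1) c)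
    (hcT : c ∉ lowerChords n m a (F.biUnion id)) :
    ∃ d ∈ lowerChords n m a (F.biUnion id), ChordsCross c d := by
  by_contra! hnc
  have hc0 : c ≠ (0, n * m + 1) := fun h => hcT (h ▸ zero_mem_lowerChords hM)
  have := mul_assoc 2 n m
  have h2 := hc.1
  have hcL := hc.2.1
  have hN : c.2 < 2 * n * m + 2 := by omega
  set D : Sym2 (ZMod (2 * n * m + 2)) := s(a + (c.1 : ZMod _), a + (c.2 : ZMod _))
  have hDc : chord a D = c := by
    rw [chord_mk_natCast a (by omega) hN]
    exact Prod.ext (min_eq_left (by omega)) (max_eq_right (by omega))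
  have hDF : ∀ q ∈ F.biUnion id, ¬ Crosses D q := by
    intro q hq
    rw [crosses_iff_chordsCross a, hDc]
    by_cases hlow : (chord a q).2 ≤ n * m + 1
    · exact hnc _ (chord_mem_lowerChords hq hlow)
    · have hMq := hF.not_crosses hM hq
      obtain ⟨i, j, hij, hj, rfl⟩ := exists_eq_mk_natCast a q
      rw [crosses_iff_chordsCross a, chord_mk_antipode, chord_mk_natCast a (by omega) hj] at hMq
      rw [chord_mk_natCast a (by omega) hj] at hlow ⊢
      simp only [ChordsCross] at hMq ⊢
      omega
  have hσDF : ∀ q ∈ F.biUnion id, ¬ Crosses (Sym2.map (antipode n m) D) q := fun q hq h => by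
    rw [← map_antipode_involutive q, crosses_map_antipode_iff] at h
    exact hDF _ (hF.map_antipode_mem hq) h
  have hvF := hF.mem_of_forall_not_crosses hmax (isBVertex_of_isAllowableChord hnm a hc hc0) (by
    simpa only [Finset.mem_insert, Finset.mem_singleton, forall_eq_or_imp, forall_eq]
      using ⟨hDF, hσDF⟩)
  exact hcT (hDc ▸ chord_mem_lowerChords
    (Finset.mem_biUnion.2 ⟨_, hvF, Finset.mem_insert_self _ _⟩) (hDc ▸ hcL))

theorem IsBFace.isMaximalNoncrossing_lowerChords (hnm : 0 < n * m) (hF : IsBFace n m F)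
    (hmax : ∀ G, IsBFace n m G → F ⊆ G → F = G) (hM : s(a, antipode n m a) ∈ F.biUnion id) :
    IsMaximalNoncrossing m (n * m + 1) (lowerChords n m a (F.biUnion id)) := by
  refine ⟨?_, ?_, ?_, fun c hc hcT => hF.exists_chordsCross_lowerChords hnm hmax hM hc hcT⟩
  · simp only [lowerChords, Finset.forall_mem_image, Finset.mem_filter]
    rintro p ⟨hp, hlow⟩
    obtain ⟨hd, ha⟩ := hF.isDiagonal_mAllowable hnm hp
    obtain ⟨i, j, hij, hj, rfl⟩ := exists_eq_mk_natCast a p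
    have := mul_assoc 2 n m
    rw [isDiagonal_mk_natCast_iff (by omega) a hij hj] at hd
    rw [mAllowable_mk_natCast_iff a (by omega) hj] at ha
    rw [chord_mk_natCast a (by omega) hj, min_eq_left hij, max_eq_right hij] at hlow ⊢
    exact ⟨hd.1, hlow, ha.1⟩
  · simp only [lowerChords, Finset.forall_mem_image, Finset.mem_filter]
    rintro p ⟨hp, -⟩ q ⟨hq, -⟩
    rw [← crosses_iff_chordsCross]
    exact hF.not_crosses hp hq
  · exact zero_mem_lowerChords hM

theorem IsBFace.card_lowerChords (hnm : 0 < n * m) (hF : IsBFace n m F)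
    (hM : s(a, antipode n m a) ∈ F.biUnion id) :
    (lowerChords n m a (F.biUnion id)).card = F.card := by
  rw [lowerChords, Finset.card_image_of_injective _ (chord_injective a)]
  refine Finset.card_nbij (fun p => {p, Sym2.map (antipode n m) p}) ?_ ?_ ?_
  · intro p hp
    obtain ⟨v, hv, hpv⟩ := Finset.mem_biUnion.1 (Finset.mem_filter.1 hp).1
    dsimp only
    rw [Finset.mem_coe, ← (hF.1 v hv).eq_pair hpv]
    exact hv
  · intro p hp q hq hpq
    dsimp only at hpq
    rw [Finset.coe_filter] at hp hq
    have : p ∈ ({q, Sym2.map (antipode n m) q} : Finset _) := hpq ▸ Finset.mem_insert_self p _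
    rcases Finset.mem_insert.1 this with h | h
    · exact h
    · rw [Finset.mem_singleton] at h
      rw [h] at hp ⊢
      exact map_antipode_eq_self_of_chord_snd_le a (hF.isDiagonal_mAllowable hnm hq.1).1 hq.2 hp.2
  · intro v hv
    have hvB := hF.1 v hv
    obtain ⟨p, hp⟩ := hvB.nonempty
    have hpB : p ∈ F.biUnion id := Finset.mem_biUnion.2 ⟨v, hv, hp⟩
    rcases chord_snd_le_or_chord_map_snd_le a (hF.not_crosses hM hpB) with h | h
    · exact ⟨p, Finset.mem_filter.2 ⟨hpB, h⟩, (hvB.eq_pair hp).symm⟩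
    · refine ⟨_, Finset.mem_filter.2 ⟨hF.map_antipode_mem hpB, h⟩, ?_⟩
      dsimp only
      rw [map_antipode_involutive, Finset.pair_comm, ← hvB.eq_pair hp]

end LowerChords

/-- Every inclusion-maximal face of `Δ_B(m, n)` has exactly `n` elements:
`Δ_B(m, n)` is pure of dimension `n - 1`. -/
theorem generalized_cluster_complex_B_pure (n m : ℕ) (hn : 2 ≤ n) (hm : 1 ≤ m)
    (F : Finset (Finset (Sym2 (ZMod (2 * n * m + 2))))) (hF : IsBFace n m F)
    (hmax : ∀ G : Finset (Finset (Sym2 (ZMod (2 * n * m + 2)))),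
      IsBFace n m G → F ⊆ G → F = G) :
    F.card = n := by
  have hnm : 0 < n * m := Nat.mul_pos (by omega) hm
  obtain ⟨a, hM⟩ := hF.exists_diameter_mem hmax
  have hcard := (hF.isMaximalNoncrossing_lowerChords hnm hmax hM).card_mul_eq
  rw [hF.card_lowerChords hnm hM, Nat.add_sub_cancel] at hcard
  exact Nat.eq_of_mul_eq_mul_right hm hcard
end

section
/- For all integers n ≥ 2 and m ≥ 1, one has Σ_{k=0}^{n} (−1)^{n−k} f^D_k(n,m) = C((n−1)(m−1)+n, n) + C((n−1)(m−1)+n−1, n); that is, the reduced Euler characteristic of Δ^m(D_n) equals (−1)^{n−1} times the number f^D_n(n, m−1) of maximal simplices of Δ^{m−1}(D_n). -/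
open Finset

/-!
Put `a = (n - 1) m`, so that `f^D_k(n, m) = C(n,k) C(a+k,k) + C(n-2,k-2) C(a+k-1,k)`. Both
alternating sums are instances of `Σ_k (-1)^(n-k) C(n,k) C(x+k, k+r) = C(x, n+r)`, an `n`-th
forward difference that follows by induction on `n` from Pascal's rule. They give `C(a, n)` and
`C(a+1, n)`, and `a + 1 = (n - 1)(m - 1) + n` when `m ≥ 1`.
-/

/-- The binomial coefficient `C(a, b)` for integers `a, b`, with the convention
that it vanishes unless `0 ≤ b ≤ a`. -/
def cc (a b : ℤ) : ℚ :=
  if 0 ≤ b ∧ b ≤ a then (a.toNat.choose b.toNat : ℚ) else 0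

/-- The type-A face numbers `f^A_k(n, m) = (1/(k+1))·C(n,k)·C((n+1)m+k+1, k)`:
the number of `k`-element faces of the generalized cluster complex `Δ^m(A_n)`. -/
def fA (n m k : ℕ) : ℚ :=
  1 / ((k : ℚ) + 1) * cc n k * cc (((n : ℤ) + 1) * m + k + 1) k

/-- The type-B face numbers `f^B_k(n, m) = C(n,k)·C(nm+k, k)`:
the number of `k`-element faces of the generalized cluster complex `Δ^m(B_n)`. -/
def fB (n m k : ℕ) : ℚ :=
  cc n k * cc ((n : ℤ) * m + k) k

/-- The type-D face numbers
`f^D_k(n, m) = C(n,k)·C((n-1)m+k, k) + C(n-2,k-2)·C((n-1)m+k-1, k)`: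
the number of `k`-element faces of the generalized cluster complex `Δ^m(D_n)`. -/
def fD (n m k : ℕ) : ℚ :=
  cc n k * cc (((n : ℤ) - 1) * m + k) k
    + cc ((n : ℤ) - 2) ((k : ℤ) - 2) * cc (((n : ℤ) - 1) * m + k - 1) k

theorem sum_choose_mul_neg_one_pow_mul_choose_add {R : Type*} [CommRing R] (n x r : ℕ) :
    ∑ k ∈ range (n + 1), (n.choose k : R) * ((-1) ^ (n - k) * ((x + k).choose (k + r) : R))
      = x.choose (n + r) := by
  induction n generalizing x r with
  | zero => simp
  | succ n ih =>
    rw [sum_choose_succ_mul (fun i j ↦ (-1 : R) ^ j * ((x + i).choose (i + r) : R))]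
    have unshifted : ∑ i ∈ range (n + 1),
        (n.choose i : R) * ((-1) ^ (n + 1 - i) * ((x + i).choose (i + r) : R))
          = -x.choose (n + r) := by
      rw [← ih x r, ← sum_neg_distrib]
      refine sum_congr rfl fun i hi ↦ ?_
      rw [Nat.sub_add_comm (Nat.lt_succ_iff.mp (mem_range.mp hi)), pow_succ]
      ring
    have shifted : ∑ i ∈ range (n + 1),
        (n.choose i : R) * ((-1) ^ (n - i) * ((x + (i + 1)).choose (i + 1 + r) : R))
          = (x + 1).choose (n + (r + 1)) := by
      rw [← ih (x + 1) (r + 1)]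
      refine sum_congr rfl fun i _ ↦ ?_
      rw [← add_assoc, add_right_comm x i 1, add_right_comm i 1 r, add_assoc i r 1]
    rw [unshifted, shifted, ← add_assoc, Nat.choose_succ_succ', add_right_comm n 1 r]
    push_cast
    ring

lemma cc_natCast (a b : ℕ) : cc a b = a.choose b := by
  unfold cc
  split_ifs with h
  · simp
  · rw [Nat.choose_eq_zero_of_lt (by omega), Nat.cast_zero]

lemma cc_of_neg {a b : ℤ} (hb : b < 0) : cc a b = 0 :=
  if_neg fun h ↦ hb.not_ge h.1

lemma sum_neg_one_pow_mul_cc_mul_cc (n a : ℕ) :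
    ∑ k ∈ range (n + 1), (-1 : ℚ) ^ (n - k) * (cc n k * cc ((a : ℤ) + k) k) = a.choose n := by
  have key := sum_choose_mul_neg_one_pow_mul_choose_add (R := ℚ) n a 0
  rw [add_zero] at key
  rw [← key]
  refine sum_congr rfl fun k _ ↦ ?_
  rw [← Nat.cast_add, cc_natCast, cc_natCast, add_zero]
  ring

lemma sum_neg_one_pow_mul_cc_sub_two_mul_cc (p a : ℕ) :
    ∑ k ∈ range (p + 2 + 1), (-1 : ℚ) ^ (p + 2 - k) * (cc p ((k : ℤ) - 2) * cc ((a : ℤ) + k - 1) k)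
      = (a + 1).choose (p + 2) := by
  rw [show p + 2 + 1 = 2 + (p + 1) by ring, sum_range_add,
    ← sum_choose_mul_neg_one_pow_mul_choose_add p (a + 1) 2]
  have vanishing : ∑ k ∈ range 2,
      (-1 : ℚ) ^ (p + 2 - k) * (cc p ((k : ℤ) - 2) * cc ((a : ℤ) + k - 1) k) = 0 := by
    simp [sum_range_succ, cc_of_neg]
  rw [vanishing, zero_add]
  refine sum_congr rfl fun i _ ↦ ?_
  have hlow : ((2 + i : ℕ) : ℤ) - 2 = i := by push_cast; ring
  have hupp : (a : ℤ) + (2 + i : ℕ) - 1 = (a + 1 + i : ℕ) := by push_cast; ring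
  rw [hlow, hupp, cc_natCast, cc_natCast, add_comm p 2, Nat.add_sub_add_left, add_comm 2 i]
  ring

lemma fD_add_two (p m k : ℕ) :
    fD (p + 2) m k = cc (p + 2 : ℕ) k * cc (((p + 1) * m : ℕ) + k) k
      + cc p ((k : ℤ) - 2) * cc (((p + 1) * m : ℕ) + k - 1) k := by
  unfold fD
  push_cast
  ring_nf

/-- `Σ_{k=0}^{n} (−1)^{n−k} f^D_k(n,m) = C((n−1)(m−1)+n, n) + C((n−1)(m−1)+n−1, n)`:
the reduced Euler characteristic of `Δ^m(D_n)` equals `(−1)^{n−1}` times the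
number `f^D_n(n, m−1)` of maximal simplices of `Δ^{m−1}(D_n)`. -/
theorem euler_characteristic_type_D (n m : ℕ) (hn : 2 ≤ n) (hm : 1 ≤ m) :
    ∑ k ∈ Finset.range (n + 1), (-1 : ℚ) ^ (n - k) * fD n m k
      = (((n - 1) * (m - 1) + n).choose n : ℚ)
        + (((n - 1) * (m - 1) + n - 1).choose n : ℚ) := by
  obtain ⟨p, rfl⟩ := Nat.exists_eq_add_of_le' hn
  obtain ⟨q, rfl⟩ := Nat.exists_eq_add_of_le' hm
  have hupper_index : (p + 2 - 1) * (q + 1 - 1) + (p + 2) = (p + 1) * (q + 1) + 1 := by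
    rw [show p + 2 - 1 = p + 1 from rfl, Nat.add_sub_cancel]
    ring
  rw [hupper_index, Nat.add_sub_cancel]
  simp only [fD_add_two]
  generalize (p + 1) * (q + 1) = a
  simp only [mul_add, sum_add_distrib]
  rw [sum_neg_one_pow_mul_cc_mul_cc, sum_neg_one_pow_mul_cc_sub_two_mul_cc, add_comm]
end
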